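/- Let φ(q,t) be C¹ and g(q, q̇, t) be C² such that φ(q,t)·g(q, q̇, t) = Σⱼ (∂f/∂qⱼ) q̇ⱼ + ∂f/∂t for some C² function f(q,t) (integrating factor). Then along every C² curve q(t): φ · 𝒟ⱼg = g · ∂φ/∂qⱼ − φ̇ · ∂g/∂q̇ⱼ for each j, where φ̇ = d/dt φ(q(t), t) and 𝒟ⱼg = d/dt(∂g/∂q̇ⱼ) − ∂g/∂qⱼ. -/

import Mathlib

/-! The hypothesis reads `φ g = Df(q,t)(q̇,1)`, which is affine in `q̇`. Differentiating in `q̇ⱼ`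
gives `φ ∂g/∂q̇ⱼ = ∂f/∂qⱼ`, whose derivative along the curve is `D²f(q̇,1)(eⱼ,0)`; differentiating
in `qⱼ` gives `g ∂φ/∂qⱼ + φ ∂g/∂qⱼ = D²f(eⱼ,0)(q̇,1)`. The two agree by symmetry of `D²f`, and
their difference is the claimed identity. -/

open Function

/-- Partial derivative of `F(q, q̇, t)` with respect to the position coordinate `qᵢ`. -/
noncomputable def pQ {n : ℕ} (F : (Fin n → ℝ) → (Fin n → ℝ) → ℝ → ℝ) (i : Fin n)
    (a v : Fin n → ℝ) (t : ℝ) : ℝ :=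
  deriv (fun z => F (Function.update a i z) v t) (a i)

/-- Partial derivative of `F(q, q̇, t)` with respect to the velocity coordinate `q̇ᵢ`. -/
noncomputable def pV {n : ℕ} (F : (Fin n → ℝ) → (Fin n → ℝ) → ℝ → ℝ) (i : Fin n)
    (a v : Fin n → ℝ) (t : ℝ) : ℝ :=
  deriv (fun z => F a (Function.update v i z) t) (v i)

/-- The velocity of a curve `q : ℝ → ℝⁿ`. -/
noncomputable def vel {n : ℕ} (q : ℝ → Fin n → ℝ) (t : ℝ) : Fin n → ℝ :=
  fun i => deriv (fun s => q s i) t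

section PartialDerivatives

variable {ι E E' α : Type*} [Fintype ι] [DecidableEq ι]
  [NormedAddCommGroup E] [NormedSpace ℝ E] [NormedAddCommGroup E'] [NormedSpace ℝ E']
  [NormedAddCommGroup α] [NormedSpace ℝ α]

theorem HasFDerivAt.hasDerivAt_update_fst {F : (ι → ℝ) × E → α} {L : (ι → ℝ) × E →L[ℝ] α}
    {a : ι → ℝ} {e : E} (hF : HasFDerivAt F L (a, e)) (j : ι) :
    HasDerivAt (fun z => F (update a j z, e)) (L (Pi.single j 1, 0)) (a j) :=
  hF.comp_hasDerivAt_of_eq _ ((hasDerivAt_update a j _).prodMk (hasDerivAt_const _ _)) (by simp)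

theorem HasFDerivAt.hasDerivAt_update_fst_fst {F : ((ι → ℝ) × E) × E' → α}
    {L : ((ι → ℝ) × E) × E' →L[ℝ] α} {a : ι → ℝ} {e : E} {e' : E'}
    (hF : HasFDerivAt F L ((a, e), e')) (j : ι) :
    HasDerivAt (fun z => F ((update a j z, e), e')) (L ((Pi.single j 1, 0), 0)) (a j) :=
  hF.comp_hasDerivAt_of_eq _
    (((hasDerivAt_update a j _).prodMk (hasDerivAt_const _ _)).prodMk (hasDerivAt_const _ _))
    (by simp)

theorem HasFDerivAt.hasDerivAt_update_snd_fst {F : (E × (ι → ℝ)) × E' → α}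
    {L : (E × (ι → ℝ)) × E' →L[ℝ] α} {e : E} {v : ι → ℝ} {e' : E'}
    (hF : HasFDerivAt F L ((e, v), e')) (j : ι) :
    HasDerivAt (fun z => F ((e, update v j z), e')) (L ((0, Pi.single j 1), 0)) (v j) :=
  hF.comp_hasDerivAt_of_eq _
    (((hasDerivAt_const _ _).prodMk (hasDerivAt_update v j _)).prodMk (hasDerivAt_const _ _))
    (by simp)

theorem ContinuousLinearMap.apply_prod_eq_sum (L : (ι → ℝ) × ℝ →L[ℝ] α) (v : ι → ℝ) (s : ℝ) :
    L (v, s) = ∑ k, v k • L (Pi.single k 1, 0) + s • L (0, 1) := by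
  have hv : (v, s)
      = ∑ k, v k • ((Pi.single k 1 : ι → ℝ), (0 : ℝ)) + s • ((0 : ι → ℝ), (1 : ℝ)) := by
    ext <;> simp [Prod.fst_sum, Prod.snd_sum, Pi.single_apply]
  conv_lhs => rw [hv]
  simp only [map_add, map_sum, map_smul]

end PartialDerivatives

section Curves

variable {n : ℕ} {q : ℝ → Fin n → ℝ}

theorem vel_eq_deriv (hq : Differentiable ℝ q) : vel q = deriv q :=
  funext fun t => (deriv_pi fun i => (differentiableAt_pi.1 (hq t)) i).symm

theorem ContDiff.differentiable_vel (hq : ContDiff ℝ 2 q) : Differentiable ℝ (vel q) := by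
  rw [vel_eq_deriv (hq.differentiable two_ne_zero)]
  exact (hq.deriv' (n := 1)).differentiable one_ne_zero

end Curves

section IntegratingFactor

variable {n : ℕ} {φ : (Fin n → ℝ) → ℝ → ℝ} {g : (Fin n → ℝ) → (Fin n → ℝ) → ℝ → ℝ}
  {F : (Fin n → ℝ) × ℝ → ℝ}

theorem pV_eq_fderiv {a v : Fin n → ℝ} {t : ℝ}
    (hg : DifferentiableAt ℝ (uncurry (uncurry g)) ((a, v), t)) (j : Fin n) :
    pV g j a v t = fderiv ℝ (uncurry (uncurry g)) ((a, v), t) ((0, Pi.single j 1), 0) :=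
  (hg.hasFDerivAt.hasDerivAt_update_snd_fst j).deriv

theorem ContDiff.differentiable_pV (hg : ContDiff ℝ 2 (uncurry (uncurry g))) (j : Fin n) :
    Differentiable ℝ (fun p : ((Fin n → ℝ) × (Fin n → ℝ)) × ℝ => pV g j p.1.1 p.1.2 p.2) := by
  simp only [pV_eq_fderiv ((hg.differentiable two_ne_zero) _)]
  exact ((hg.fderiv_right (by norm_num)).differentiable one_ne_zero).clm_apply
    (differentiable_const _)

theorem mul_eq_fderiv_of_integrating_factor {f : (Fin n → ℝ) → ℝ → ℝ}
    (hf : Differentiable ℝ (uncurry f))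
    (hfac : ∀ a v t, φ a t * g a v t
      = (∑ j, deriv (fun z => f (update a j z) t) (a j) * v j) + deriv (fun s => f a s) t)
    (a v : Fin n → ℝ) (t : ℝ) : φ a t * g a v t = fderiv ℝ (uncurry f) (a, t) (v, 1) := by
  have hL := (hf (a, t)).hasFDerivAt
  have hpos (j : Fin n) : deriv (fun z => f (update a j z) t) (a j)
      = fderiv ℝ (uncurry f) (a, t) (Pi.single j 1, 0) :=
    (hL.hasDerivAt_update_fst j).deriv
  have htime : deriv (fun s => f a s) t = fderiv ℝ (uncurry f) (a, t) (0, 1) :=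
    (hL.comp_hasDerivAt t ((hasDerivAt_const t a).prodMk (hasDerivAt_id t))).deriv
  simp only [hfac, hpos, htime, ContinuousLinearMap.apply_prod_eq_sum _ v, smul_eq_mul, one_mul,
    mul_comm]

theorem mul_pV_eq_fderiv (hg : Differentiable ℝ (uncurry (uncurry g)))
    (hφg : ∀ a v t, φ a t * g a v t = fderiv ℝ F (a, t) (v, 1)) (j : Fin n)
    (a v : Fin n → ℝ) (t : ℝ) : φ a t * pV g j a v t = fderiv ℝ F (a, t) (Pi.single j 1, 0) := by
  have hgj : DifferentiableAt ℝ (fun z => g a (update v j z) t) (v j) :=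
    ((hg ((a, v), t)).hasFDerivAt.hasDerivAt_update_snd_fst j).differentiableAt
  have hL : HasDerivAt (fun z => fderiv ℝ F (a, t) (update v j z, 1))
      (fderiv ℝ F (a, t) (Pi.single j 1, 0)) (v j) :=
    (fderiv ℝ F (a, t)).hasFDerivAt.hasDerivAt_update_fst j
  calc φ a t * pV g j a v t = deriv (fun z => φ a t * g a (update v j z) t) (v j) :=
        (deriv_const_mul _ hgj).symm
    _ = deriv (fun z => fderiv ℝ F (a, t) (update v j z, 1)) (v j) := by simp only [hφg]
    _ = fderiv ℝ F (a, t) (Pi.single j 1, 0) := hL.deriv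

theorem deriv_mul_pV_along_eq_fderiv_fderiv {q : ℝ → Fin n → ℝ} {t : ℝ}
    (hφ : Differentiable ℝ (uncurry φ)) (hF : DifferentiableAt ℝ (fderiv ℝ F) (q t, t))
    (hg : ContDiff ℝ 2 (uncurry (uncurry g)))
    (hφg : ∀ a v t, φ a t * g a v t = fderiv ℝ F (a, t) (v, 1)) (hq : ContDiff ℝ 2 q)
    (j : Fin n) :
    deriv (fun s => φ (q s) s) t * pV g j (q t) (vel q t) t
        + φ (q t) t * deriv (fun s => pV g j (q s) (vel q s) s) t
      = fderiv ℝ (fderiv ℝ F) (q t, t) (vel q t, 1) (Pi.single j 1, 0) := by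
  have hqd : Differentiable ℝ q := hq.differentiable two_ne_zero
  have hcurve : HasDerivAt (fun s => (q s, s)) (vel q t, 1) t := by
    rw [vel_eq_deriv hqd]
    exact (hqd t).hasDerivAt.prodMk (hasDerivAt_id t)
  have hφq : DifferentiableAt ℝ (fun s => φ (q s) s) t :=
    ((hφ (q t, t)).hasFDerivAt.comp_hasDerivAt (f := fun s => (q s, s)) t hcurve).differentiableAt
  have hpVq : DifferentiableAt ℝ (fun s => pV g j (q s) (vel q s) s) t :=
    (hg.differentiable_pV j _).comp t
      (((hqd t).prodMk (hq.differentiable_vel t)).prodMk differentiableAt_id)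
  have hderiv : HasDerivAt (fun s => fderiv ℝ F (q s, s) (Pi.single j 1, 0))
      (fderiv ℝ (fderiv ℝ F) (q t, t) (vel q t, 1) (Pi.single j 1, 0)) t := by
    simpa using (hF.hasFDerivAt.comp_hasDerivAt (f := fun s => (q s, s)) t hcurve).clm_apply
      (hasDerivAt_const t ((Pi.single j 1 : Fin n → ℝ), (0 : ℝ)))
  rw [← deriv_fun_mul hφq hpVq]
  simp only [mul_pV_eq_fderiv (hg.differentiable two_ne_zero) hφg]
  exact hderiv.deriv

theorem deriv_update_mul_eq_fderiv_fderiv {a v : Fin n → ℝ} {t : ℝ}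
    (hφ : DifferentiableAt ℝ (uncurry φ) (a, t))
    (hg : DifferentiableAt ℝ (uncurry (uncurry g)) ((a, v), t))
    (hF : DifferentiableAt ℝ (fderiv ℝ F) (a, t))
    (hφg : ∀ a v t, φ a t * g a v t = fderiv ℝ F (a, t) (v, 1)) (j : Fin n) :
    g a v t * deriv (fun z => φ (update a j z) t) (a j) + φ a t * pQ g j a v t
      = fderiv ℝ (fderiv ℝ F) (a, t) (Pi.single j 1, 0) (v, 1) := by
  have hφj := hφ.hasFDerivAt.hasDerivAt_update_fst j
  have hgj := hg.hasFDerivAt.hasDerivAt_update_fst_fst j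
  have hderiv : HasDerivAt (fun z => fderiv ℝ F (update a j z, t) (v, 1))
      (fderiv ℝ (fderiv ℝ F) (a, t) (Pi.single j 1, 0) (v, 1)) (a j) := by
    simpa using (hF.hasFDerivAt.hasDerivAt_update_fst j).clm_apply
      (hasDerivAt_const (a j) ((v, 1) : (Fin n → ℝ) × ℝ))
  have hprod := hφj.differentiableAt.hasDerivAt.fun_mul hgj.differentiableAt.hasDerivAt
  simp only [uncurry_apply_pair, hφg, update_eq_self] at hprod
  rw [pQ, mul_comm (g a v t)]
  exact hprod.unique hderiv

end IntegratingFactor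

/-- Integrating factor: if `φ(q,t)·g(q,q̇,t) = Σⱼ (∂f/∂qⱼ) q̇ⱼ + ∂f/∂t`, then along every
C² curve, `φ·𝒟ⱼg = g·∂φ/∂qⱼ − φ̇·∂g/∂q̇ⱼ` for each `j`. -/
theorem integrating_factor_lagrangian_derivative {n : ℕ}
    (φ : (Fin n → ℝ) → ℝ → ℝ)
    (hφ : ContDiff ℝ 1 (fun p : (Fin n → ℝ) × ℝ => φ p.1 p.2))
    (f : (Fin n → ℝ) → ℝ → ℝ)
    (hf : ContDiff ℝ 2 (fun p : (Fin n → ℝ) × ℝ => f p.1 p.2))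
    (g : (Fin n → ℝ) → (Fin n → ℝ) → ℝ → ℝ)
    (hg : ContDiff ℝ 2 (fun p : ((Fin n → ℝ) × (Fin n → ℝ)) × ℝ => g p.1.1 p.1.2 p.2))
    (hfac : ∀ a v t, φ a t * g a v t
      = (∑ j, deriv (fun z => f (Function.update a j z) t) (a j) * v j)
        + deriv (fun s => f a s) t)
    (q : ℝ → Fin n → ℝ) (hq : ContDiff ℝ 2 q) :
    ∀ t (j : Fin n),
      φ (q t) t * (deriv (fun s => pV g j (q s) (vel q s) s) t - pQ g j (q t) (vel q t) t)
        = g (q t) (vel q t) t * deriv (fun z => φ (Function.update (q t) j z) t) (q t j)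
          - deriv (fun s => φ (q s) s) t * pV g j (q t) (vel q t) t := by
  intro t j
  have hφ' : Differentiable ℝ (uncurry φ) := hφ.differentiable one_ne_zero
  have hf' : ContDiff ℝ 2 (uncurry f) := hf
  have hg' : ContDiff ℝ 2 (uncurry (uncurry g)) := hg
  have hDf : Differentiable ℝ (fderiv ℝ (uncurry f)) :=
    (hf'.fderiv_right (by norm_num)).differentiable one_ne_zero
  have hφg := mul_eq_fderiv_of_integrating_factor (hf'.differentiable two_ne_zero) hfac
  have htime := deriv_mul_pV_along_eq_fderiv_fderiv hφ' (hDf (q t, t)) hg' hφg hq j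
  have hspace := deriv_update_mul_eq_fderiv_fderiv (hφ' (q t, t))
    (hg'.differentiable two_ne_zero ((q t, vel q t), t)) (hDf (q t, t)) hφg j
  have hsymm := (hf'.contDiffAt (x := (q t, t))).isSymmSndFDerivAt (by simp)
    (vel q t, 1) (Pi.single j 1, 0)
  linear_combination htime - hspace + hsymm
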